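/- arXiv:math/0406419 — 4 statements merged into one kernel-verified Lean document; each statement's English description precedes it below -/
import Mathlib

section
/- Let f and h be distinct monic real polynomials of degree n, and suppose there exist real symmetric n×n matrices A and B with B − A of rank one, say B = A + εxxᵀ with ε = ±1 and x ≠ 0, such that f(z) = det(zI − A) and h(z) = det(zI − B). Then for every real α, all roots of αf + (1−α)h are real. -/
open Matrix Polynomial

variable {n : ℕ}

lemma my_eval_charpoly (M : Matrix (Fin n) (Fin n) ℝ) (z : ℝ) :
    M.charpoly.eval z = (z • (1 : Matrix (Fin n) (Fin n) ℝ) - M).det := by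
  rw [Matrix.charpoly, ← Polynomial.coe_evalRingHom, RingHom.map_det]
  congr 1
  ext i j
  by_cases hij : i = j
  · subst hij
    simp [charmatrix_apply_eq, Matrix.smul_apply, Matrix.one_apply]
  · simp [charmatrix_apply_ne _ _ _ hij, Matrix.smul_apply, Matrix.one_apply, hij]

lemma det_lemma_pt (N : Matrix (Fin n) (Fin n) ℝ) (hN : IsUnit N.det)
    (u v : Fin n → ℝ) (c : ℝ) :
    (N - c • vecMulVec u v).det
      = N.det * (1 - c * ((replicateRow (Fin 1) v * N⁻¹ * replicateCol (Fin 1) u) 0 0)) := by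
  have h1 : N - c • vecMulVec u v = N + replicateCol (Fin 1) ((-c) • u) * replicateRow (Fin 1) v := by
    rw [vecMulVec_eq (Fin 1)]
    ext i j
    simp [Matrix.mul_apply, Matrix.sub_apply, Matrix.add_apply, Matrix.smul_apply,
      Matrix.replicateCol_apply, Matrix.replicateRow_apply]
    ring
  rw [h1]
  refine (Matrix.det_add_replicateCol_mul_replicateRow (ι := Fin 1) hN _ _).trans ?_
  congr 1
  have h2 : replicateCol (Fin 1) ((-c) • u) = (-c) • replicateCol (Fin 1) u := by
    ext i j; simp
  rw [h2, Matrix.mul_smul]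
  rw [@Matrix.det_unique _ _ _ _ (fun a b => decidableEq_of_subsingleton a b)]
  simp [Matrix.add_apply, Matrix.smul_apply, Matrix.one_apply]
  ring


lemma charpoly_conj_units (P Q D : Matrix (Fin n) (Fin n) ℝ) (hPQ : P * Q = 1)
    (hQP : Q * P = 1) : (P * D * Q).charpoly = D.charpoly := by
  unfold Matrix.charpoly
  have hmap : ∀ M N : Matrix (Fin n) (Fin n) ℝ,
      (C : ℝ →+* ℝ[X]).mapMatrix (M * N)
        = (C : ℝ →+* ℝ[X]).mapMatrix M * (C : ℝ →+* ℝ[X]).mapMatrix N :=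
    fun M N => map_mul (RingHom.mapMatrix (C : ℝ →+* ℝ[X])) M N
  have key : charmatrix (P * D * Q)
      = (C : ℝ →+* ℝ[X]).mapMatrix P * charmatrix D * (C : ℝ →+* ℝ[X]).mapMatrix Q := by
    unfold charmatrix
    rw [Matrix.mul_sub, Matrix.sub_mul]
    congr 1
    · rw [← (Matrix.scalar_commute (X : ℝ[X]) (fun r => Commute.all _ _)
        ((C : ℝ →+* ℝ[X]).mapMatrix P)).eq, mul_assoc, ← hmap, hPQ]
      simp
    · rw [hmap, hmap]
  rw [key, Matrix.det_mul, Matrix.det_mul, mul_comm, ← mul_assoc, ← Matrix.det_mul, ← hmap,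
    hQP]
  simp


lemma charpoly_affine (A : Matrix (Fin n) (Fin n) ℝ) (u v : Fin n → ℝ) (c : ℝ) :
    (A + c • vecMulVec u v).charpoly
      = (1 - c) • A.charpoly + c • (A + vecMulVec u v).charpoly := by
  apply Polynomial.eq_of_infinite_eval_eq
  have hfin : {z : ℝ | A.charpoly.IsRoot z}.Finite :=
    Polynomial.finite_setOf_isRoot (A.charpoly_monic.ne_zero)
  refine (hfin.infinite_compl).mono ?_
  intro z hz
  have hd : ((z • (1 : Matrix (Fin n) (Fin n) ℝ)) - A).det ≠ 0 := by
    rw [← my_eval_charpoly]; exact hz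
  have hN : IsUnit ((z • (1 : Matrix (Fin n) (Fin n) ℝ)) - A).det :=
    isUnit_iff_ne_zero.mpr hd
  simp only [Set.mem_setOf_eq, eval_add, eval_smul, smul_eq_mul]
  have e2 : A + vecMulVec u v = A + (1 : ℝ) • vecMulVec u v := by rw [one_smul]
  rw [my_eval_charpoly, my_eval_charpoly, my_eval_charpoly, e2,
    sub_add_eq_sub_sub, sub_add_eq_sub_sub, det_lemma_pt _ hN u v c,
    det_lemma_pt _ hN u v 1]
  ring

lemma symm_charpoly_roots_card (S : Matrix (Fin n) (Fin n) ℝ) (hS : S.IsSymm) :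
    S.charpoly.roots.card = n := by
  have hH : S.IsHermitian := by
    rw [Matrix.IsHermitian, Matrix.conjTranspose_eq_transpose_of_trivial]; exact hS
  set U : Matrix (Fin n) (Fin n) ℝ := (hH.eigenvectorUnitary : Matrix (Fin n) (Fin n) ℝ)
  have hPQ : U * star U = 1 := (Matrix.mem_unitaryGroup_iff).mp hH.eigenvectorUnitary.2
  have hQP : star U * U = 1 := (Matrix.mem_unitaryGroup_iff').mp hH.eigenvectorUnitary.2
  have hdiag : S.charpoly
      = (Matrix.diagonal (RCLike.ofReal ∘ hH.eigenvalues) : Matrix (Fin n) (Fin n) ℝ).charpoly := by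
    conv_lhs => rw [hH.spectral_theorem]
    exact charpoly_conj_units U (star U) _ hPQ hQP
  have hsplit : (Matrix.diagonal (RCLike.ofReal ∘ hH.eigenvalues) :
      Matrix (Fin n) (Fin n) ℝ).charpoly = ∏ i : Fin n, (X - C (hH.eigenvalues i)) := by
    rw [Matrix.charpoly_of_upperTriangular _ (Matrix.blockTriangular_diagonal _)]
    simp [Matrix.diagonal_apply_eq]
  have hsp : S.charpoly.Splits := by
    rw [hdiag, hsplit]
    exact Polynomial.Splits.prod (fun i _ => Polynomial.Splits.X_sub_C _)
  rw [(Polynomial.splits_iff_card_roots).mp hsp, Matrix.charpoly_natDegree_eq_dim,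
    Fintype.card_fin]


/-- If distinct monic real polynomials `f`, `h` of degree `n` are the characteristic
polynomials of real symmetric matrices `A` and `B = A ± xxᵀ` differing by a rank-one
symmetric matrix, then all roots of `αf + (1-α)h` are real, for every real `α`. -/
theorem real_roots_of_combination_rank_one (n : ℕ) (f h : Polynomial ℝ)
    (hf : f.Monic) (hh : h.Monic) (hdf : f.natDegree = n) (hdh : h.natDegree = n)
    (hne : f ≠ h) (A : Matrix (Fin n) (Fin n) ℝ) (hA : A.IsSymm)
    (ε : ℝ) (hε : ε = 1 ∨ ε = -1) (x : Fin n → ℝ) (hx : x ≠ 0)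
    (hfA : A.charpoly = f)
    (hhB : (A + ε • vecMulVec x x).charpoly = h) :
    ∀ α : ℝ, (α • f + (1 - α) • h).roots.card = n := by
  intro α
  have hxx : vecMulVec (ε • x) x = ε • vecMulVec x x := by
    ext i j
    simp only [Matrix.vecMulVec_apply, Matrix.smul_apply, Pi.smul_apply, smul_eq_mul]
    ring
  have key := charpoly_affine A (ε • x) x (1 - α)
  rw [show (1 : ℝ) - (1 - α) = α by ring, hxx, hfA, hhB] at key
  rw [← key]
  apply symm_charpoly_roots_card
  rw [Matrix.IsSymm]
  ext i j
  have hAij : A j i = A i j := congrFun (congrFun hA i) j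
  simp only [Matrix.transpose_apply, Matrix.add_apply, Matrix.smul_apply,
    Matrix.vecMulVec_apply, smul_eq_mul]
  rw [hAij]
  ring
end

section
/- Let f be a monic real polynomial of degree n with companion matrix C_f, and suppose there exists a real positive definite matrix P such that PC_f = C_fᵀP. Then all roots of f are real. -/
open Matrix Polynomial

/-- Companion matrix of a monic polynomial of degree `n`. -/
def companion (n : ℕ) (p : Polynomial ℝ) : Matrix (Fin n) (Fin n) ℝ :=
  Matrix.of fun i j =>
    if (i : ℕ) + 1 = (j : ℕ) then 1
    else if (i : ℕ) = n - 1 then -p.coeff (j : ℕ) else 0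

lemma companion_mulVec_pow {n : ℕ} {f : Polynomial ℝ} (hf : f.Monic) (hdf : f.natDegree = n)
    {z : ℂ} (hz : aeval z f = 0) :
    ((companion n f).map (algebraMap ℝ ℂ)) *ᵥ (fun i : Fin n => z ^ (i : ℕ))
      = z • (fun i : Fin n => z ^ (i : ℕ)) := by
  funext i
  have hn : 0 < n := i.pos
  simp only [mulVec, dotProduct, map_apply, companion, of_apply, Pi.smul_apply, smul_eq_mul]
  by_cases hi : (i : ℕ) = n - 1
  · have h1 : ∀ j : Fin n, ¬ ((i : ℕ) + 1 = (j : ℕ)) := by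
      intro j h; have := j.2; omega
    have heval : (Finset.univ.sum fun j : Fin n => ((algebraMap ℝ ℂ) (f.coeff (j : ℕ))) * z ^ (j : ℕ)) = -z ^ n := by
      have h := Polynomial.aeval_eq_sum_range (R := ℝ) (S := ℂ) (p := f) z
      rw [hz, hdf, Finset.sum_range_succ] at h
      have hcn : f.coeff n = 1 := by rw [← hdf]; exact hf.coeff_natDegree
      rw [hcn] at h
      simp only [Algebra.smul_def] at h
      rw [Fin.sum_univ_eq_sum_range (fun j => ((algebraMap ℝ ℂ) (f.coeff j)) * z ^ j)]
      simp only [_root_.map_one, one_mul] at h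
      linear_combination -h
    calc (Finset.univ.sum fun j : Fin n =>
          (algebraMap ℝ ℂ) (if (i : ℕ) + 1 = (j : ℕ) then 1
            else if (i : ℕ) = n - 1 then -f.coeff (j : ℕ) else 0) * z ^ (j : ℕ))
        = Finset.univ.sum fun j : Fin n => -(((algebraMap ℝ ℂ) (f.coeff (j : ℕ))) * z ^ (j : ℕ)) := by
          refine Finset.sum_congr rfl fun j _ => ?_
          rw [if_neg (h1 j), if_pos hi, map_neg, neg_mul]
      _ = z ^ n := by rw [Finset.sum_neg_distrib, heval, neg_neg]
      _ = z * z ^ (i : ℕ) := by rw [hi, ← pow_succ', Nat.sub_add_cancel hn]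
  · have hlt : (i : ℕ) + 1 < n := by have := i.2; omega
    rw [Finset.sum_eq_single (⟨(i : ℕ) + 1, hlt⟩ : Fin n)]
    · simp [pow_succ']
    · intro j _ hj
      have : ¬ ((i : ℕ) + 1 = (j : ℕ)) := fun h => hj (by ext; simp [← h])
      rw [if_neg this, if_neg hi, map_zero, zero_mul]
    · intro h; exact absurd (Finset.mem_univ _) h

lemma map_mulVec_star {n : ℕ} (M : Matrix (Fin n) (Fin n) ℝ) (w : Fin n → ℂ) :
    (M.map (algebraMap ℝ ℂ)) *ᵥ (star w) = star ((M.map (algebraMap ℝ ℂ)) *ᵥ w) := by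
  funext i
  simp only [mulVec, dotProduct, map_apply, Pi.star_apply, star_sum, star_mul', Complex.star_def,
    Complex.conj_ofReal]
  refine Finset.sum_congr rfl fun j _ => ?_
  rw [show ((algebraMap ℝ ℂ) (M i j)) = ((M i j : ℝ) : ℂ) from rfl, Complex.conj_ofReal]

lemma re_quad_form {n : ℕ} (P : Matrix (Fin n) (Fin n) ℝ) (v : Fin n → ℂ) :
    (star v ⬝ᵥ ((P.map (algebraMap ℝ ℂ)) *ᵥ v)).re
      = (fun i => (v i).re) ⬝ᵥ (P *ᵥ fun i => (v i).re)
        + (fun i => (v i).im) ⬝ᵥ (P *ᵥ fun i => (v i).im) := by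
  simp only [dotProduct, mulVec, Pi.star_apply, Complex.star_def, map_apply, Finset.mul_sum,
    ← Finset.sum_add_distrib, Complex.re_sum]
  refine Finset.sum_congr rfl fun i _ => ?_
  refine Finset.sum_congr rfl fun j _ => ?_
  simp [Complex.mul_re, Complex.mul_im, Complex.conj_re, Complex.conj_im]

/-- If there is a real positive definite `P` with `P C_f = C_fᵀ P`, then all roots of the
monic real polynomial `f` of degree `n` are real. -/
theorem real_roots_of_posdef_symmetrizer (n : ℕ) (f : Polynomial ℝ)
    (hf : f.Monic) (hdf : f.natDegree = n)
    (P : Matrix (Fin n) (Fin n) ℝ) (hP : P.PosDef)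
    (hsym : P * companion n f = (companion n f)ᵀ * P) :
    f.roots.card = n := by
  rw [← hdf, ← Polynomial.splits_iff_card_roots]
  apply Polynomial.Splits.of_splits_map (algebraMap ℝ ℂ) (IsAlgClosed.splits _)
  intro z hz
  have hf0 : f ≠ 0 := hf.ne_zero
  have hzr : aeval z f = 0 := by
    have := (Polynomial.mem_roots (Polynomial.map_ne_zero hf0 (f := algebraMap ℝ ℂ))).1 hz
    rw [Polynomial.aeval_def, ← Polynomial.eval_map]
    exact this
  have hn : 0 < n := by
    by_contra h
    have hn0 : n = 0 := by omega
    have : f = 1 := hf.natDegree_eq_zero.1 (hdf.trans hn0)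
    rw [this] at hzr
    simp at hzr
  set v : Fin n → ℂ := fun i => z ^ (i : ℕ) with hv
  set Cc := (companion n f).map (algebraMap ℝ ℂ) with hCc
  set Pc := P.map (algebraMap ℝ ℂ) with hPc
  have key1 : Cc *ᵥ v = z • v := companion_mulVec_pow hf hdf hzr
  have key1' : Cc *ᵥ (star v) = (starRingEnd ℂ z) • star v := by
    rw [map_mulVec_star, key1]
    funext i
    simp [Complex.star_def]
  set s : ℂ := star v ⬝ᵥ (Pc *ᵥ v) with hs
  have hsymc : Pc * Cc = Ccᵀ * Pc := by
    rw [hPc, hCc, ← Matrix.map_mul, ← Matrix.transpose_map, ← Matrix.map_mul, hsym]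
  have key3 : z * s = (starRingEnd ℂ z) * s := by
    have e1 : star v ⬝ᵥ (Pc *ᵥ (Cc *ᵥ v)) = z * s := by
      rw [key1, Matrix.mulVec_smul, dotProduct_smul, hs, smul_eq_mul]
    have e2 : star v ⬝ᵥ (Pc *ᵥ (Cc *ᵥ v)) = (starRingEnd ℂ z) * s := by
      rw [Matrix.mulVec_mulVec, hsymc, ← Matrix.mulVec_mulVec, Matrix.dotProduct_mulVec,
        Matrix.vecMul_transpose, key1', smul_dotProduct, smul_eq_mul, hs,
        Matrix.dotProduct_mulVec]
    rw [← e1, e2]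
  have hsre : 0 < s.re := by
    rw [hs, re_quad_form]
    have ha : (fun i => (v i).re) ≠ 0 := by
      intro h
      have := congrFun h ⟨0, hn⟩
      simp [hv] at this
    have h1 : 0 < (fun i => (v i).re) ⬝ᵥ (P *ᵥ fun i => (v i).re) := by
      have := hP.dotProduct_mulVec_pos ha
      simpa using this
    have h2 : 0 ≤ (fun i => (v i).im) ⬝ᵥ (P *ᵥ fun i => (v i).im) := by
      have := hP.posSemidef.dotProduct_mulVec_nonneg (fun i => (v i).im)
      simpa using this
    linarith
  have hs0 : s ≠ 0 := fun h => by simp [h] at hsre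
  have hzz : z = starRingEnd ℂ z := mul_right_cancel₀ hs0 key3
  refine ⟨z.re, ?_⟩
  have him : z.im = 0 := Complex.conj_eq_iff_im.1 hzz.symm
  apply Complex.ext <;> simp [him]
end

section
/- Let L and M be monic n×n matrix polynomials of degree ℓ, and suppose there exist real symmetric nℓ×nℓ matrices A and B such that for every real α the multiset of roots of det(αL(z) + (1−α)M(z)) equals the multiset of eigenvalues of αA + (1−α)B. Then for every α ∈ [0,1] the largest root of det(αL(z) + (1−α)M(z)) is at most α·(largest root of det L) + (1−α)·(largest root of det M). -/
/-!
Putting `α = 1` and `α = 0` in the hypothesis identifies the roots of `det L` and `det M` with the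
eigenvalues of `A` and `B`. In the Loewner order a self-adjoint `S` satisfies `S ≤ r • 1` exactly
when its spectrum lies below `r`, so `A ≤ aM • 1` and `B ≤ bM • 1` give
`α • A + (1 - α) • B ≤ (α * aM + (1 - α) * bM) • 1`, which bounds every eigenvalue of the
combination, i.e. every root of `det (α L + (1 - α) M)`. This is Weyl's inequality for the largest
eigenvalue.
-/

open Matrix Polynomial

/-- The monic `n × n` matrix polynomial `z^ℓ I + Σ_{j<ℓ} z^j L_j`, as a matrix with
polynomial entries. -/
noncomputable def matPoly (n ℓ : ℕ) (Lc : Fin ℓ → Matrix (Fin n) (Fin n) ℝ) :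
    Matrix (Fin n) (Fin n) (Polynomial ℝ) :=
  Matrix.of fun i k =>
    X ^ ℓ * (if i = k then 1 else 0) + ∑ j : Fin ℓ, C (Lc j i k) * X ^ (j : ℕ)

open scoped MatrixOrder

theorem spectrum_le_convex_combination {A : Type*} [TopologicalSpace A] [Ring A] [StarRing A]
    [PartialOrder A] [StarOrderedRing A] [Algebra ℝ A] [StarModule ℝ A]
    [ContinuousFunctionalCalculus ℝ A IsSelfAdjoint] [NonnegSpectrumClass ℝ A]
    {a b : A} (ha : IsSelfAdjoint a) (hb : IsSelfAdjoint b) {r s t : ℝ} (ht₀ : 0 ≤ t)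
    (ht₁ : t ≤ 1) (har : ∀ x ∈ spectrum ℝ a, x ≤ r) (hbs : ∀ x ∈ spectrum ℝ b, x ≤ s) :
    ∀ x ∈ spectrum ℝ (t • a + (1 - t) • b), x ≤ t * r + (1 - t) * s := by
  rw [← le_algebraMap_iff_spectrum_le] at har hbs ⊢
  calc t • a + (1 - t) • b ≤ t • algebraMap ℝ A r + (1 - t) • algebraMap ℝ A s := by
        gcongr
    _ = algebraMap ℝ A (t * r + (1 - t) * s) := by
        rw [map_add, map_mul, map_mul, Algebra.smul_def, Algebra.smul_def]

theorem Matrix.mem_spectrum_iff_mem_roots_charpoly {m K : Type*} [Fintype m] [DecidableEq m]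
    [Field K] {A : Matrix m m K} {r : K} : r ∈ spectrum K A ↔ r ∈ A.charpoly.roots := by
  rw [mem_spectrum_iff_isRoot_charpoly, mem_roots A.charpoly_monic.ne_zero]

theorem largest_root_convexity_general (n ℓ : ℕ)
    (Lc Mc : Fin ℓ → Matrix (Fin n) (Fin n) ℝ)
    (A B : Matrix (Fin (n * ℓ)) (Fin (n * ℓ)) ℝ) (hA : A.IsSymm) (hB : B.IsSymm)
    (hroots : ∀ α : ℝ,
      (C α • matPoly n ℓ Lc + C (1 - α) • matPoly n ℓ Mc).det.roots =
        ((α • A + (1 - α) • B).charpoly).roots) :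
    ∀ α ∈ Set.Icc (0 : ℝ) 1,
      ∀ x ∈ (C α • matPoly n ℓ Lc + C (1 - α) • matPoly n ℓ Mc).det.roots,
        ∀ aM bM : ℝ,
          aM ∈ (matPoly n ℓ Lc).det.roots →
          (∀ a ∈ (matPoly n ℓ Lc).det.roots, a ≤ aM) →
          bM ∈ (matPoly n ℓ Mc).det.roots →
          (∀ b ∈ (matPoly n ℓ Mc).det.roots, b ≤ bM) →
          x ≤ α * aM + (1 - α) * bM := by
  rintro α ⟨hα₀, hα₁⟩ x hx aM bM - haM - hbM
  have hL : (matPoly n ℓ Lc).det.roots = A.charpoly.roots := by simpa using hroots 1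
  have hM : (matPoly n ℓ Mc).det.roots = B.charpoly.roots := by simpa using hroots 0
  refine spectrum_le_convex_combination (isHermitian_iff_isSymm.mpr hA)
    (isHermitian_iff_isSymm.mpr hB) hα₀ hα₁ ?_ ?_ x ?_
  · intro a ha
    exact haM a (hL ▸ mem_spectrum_iff_mem_roots_charpoly.mp ha)
  · intro b hb
    exact hbM b (hM ▸ mem_spectrum_iff_mem_roots_charpoly.mp hb)
  · exact mem_spectrum_iff_mem_roots_charpoly.mpr (hroots α ▸ hx)

/-- If for every real `α` the roots of `det(αL(z)+(1-α)M(z))` coincide (as multisets) with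
the eigenvalues of `αA + (1-α)B` for fixed real symmetric `A`, `B`, then for `α ∈ [0,1]`
the largest root of `det(αL(z)+(1-α)M(z))` is at most
`α·(largest root of det L) + (1-α)·(largest root of det M)`. -/
theorem largest_root_convexity (n ℓ : ℕ) (hn : 0 < n) (hℓ : 0 < ℓ)
    (Lc Mc : Fin ℓ → Matrix (Fin n) (Fin n) ℝ)
    (A B : Matrix (Fin (n * ℓ)) (Fin (n * ℓ)) ℝ) (hA : A.IsSymm) (hB : B.IsSymm)
    (hroots : ∀ α : ℝ,
      (C α • matPoly n ℓ Lc + C (1 - α) • matPoly n ℓ Mc).det.roots =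
        ((α • A + (1 - α) • B).charpoly).roots) :
    ∀ α ∈ Set.Icc (0 : ℝ) 1,
      ∀ x ∈ (C α • matPoly n ℓ Lc + C (1 - α) • matPoly n ℓ Mc).det.roots,
        ∀ aM bM : ℝ,
          aM ∈ (matPoly n ℓ Lc).det.roots →
          (∀ a ∈ (matPoly n ℓ Lc).det.roots, a ≤ aM) →
          bM ∈ (matPoly n ℓ Mc).det.roots →
          (∀ b ∈ (matPoly n ℓ Mc).det.roots, b ≤ bM) →
          x ≤ α * aM + (1 - α) * bM :=
  largest_root_convexity_general n ℓ Lc Mc A B hA hB hroots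
end

section
/- Let A be a real symmetric n×n matrix and x ∈ ℝ^n. Then the eigenvalues of A and of A + xxᵀ interlace: λ_i(A) ≤ λ_i(A + xxᵀ) ≤ λ_{i+1}(A) for i = 1, ..., n−1, and λ_n(A) ≤ λ_n(A + xxᵀ), where λ_1 ≤ ... ≤ λ_n denote eigenvalues in nondecreasing order. -/
open Matrix Polynomial Finset
open scoped RealInnerProductSpace

section InnerAux

variable {E : Type*} [NormedAddCommGroup E] [InnerProductSpace ℝ E]
variable {ι : Type*} [Fintype ι]

lemma aux_inner_eq_zero_of_mem_span (b : OrthonormalBasis ι ℝ E)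
    (s : Finset ι) {i : ι} (hi : i ∉ s) {v : E}
    (hv : v ∈ Submodule.span ℝ (b '' (s : Set ι))) : ⟪b i, v⟫ = 0 := by
  induction hv using Submodule.span_induction with
  | mem y hy =>
      obtain ⟨j, hj, rfl⟩ := hy
      exact b.orthonormal.2 (fun h => hi (h ▸ hj))
  | zero => simp
  | add y z _ _ hy hz => rw [inner_add_right, hy, hz, add_zero]
  | smul a y _ hy => rw [inner_smul_right, hy, mul_zero]

lemma aux_inner_map (b : OrthonormalBasis ι ℝ E) (T : E →ₗ[ℝ] E) (lam : ι → ℝ)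
    (hT : ∀ i, T (b i) = lam i • b i) (v : E) :
    ⟪T v, v⟫ = ∑ i, lam i * ⟪b i, v⟫ ^ 2 := by
  have hTv : T v = ∑ i, (lam i * ⟪b i, v⟫) • b i := by
    conv_lhs => rw [← b.sum_repr' v]
    rw [map_sum]
    refine Finset.sum_congr rfl fun i _ => ?_
    rw [LinearMap.map_smul, hT i, smul_smul, mul_comm]
  rw [hTv, sum_inner]
  refine Finset.sum_congr rfl fun i _ => ?_
  rw [real_inner_smul_left]
  ring

lemma aux_inner_self (b : OrthonormalBasis ι ℝ E) (v : E) :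
    ⟪v, v⟫ = ∑ i, ⟪b i, v⟫ ^ 2 := by
  rw [← b.sum_inner_mul_inner v v]
  refine Finset.sum_congr rfl fun i _ => ?_
  rw [real_inner_comm v (b i)]; ring

lemma aux_rayleigh_low (b : OrthonormalBasis ι ℝ E) (T : E →ₗ[ℝ] E) (lam : ι → ℝ)
    (hT : ∀ i, T (b i) = lam i • b i) (s : Finset ι) (c : ℝ)
    (hc : ∀ i ∈ s, c ≤ lam i) {v : E}
    (hv : v ∈ Submodule.span ℝ (b '' (s : Set ι))) :
    c * ⟪v, v⟫ ≤ ⟪T v, v⟫ := by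
  rw [aux_inner_map b T lam hT v, aux_inner_self b v, Finset.mul_sum]
  refine Finset.sum_le_sum fun i _ => ?_
  by_cases his : i ∈ s
  · exact mul_le_mul_of_nonneg_right (hc i his) (sq_nonneg _)
  · rw [aux_inner_eq_zero_of_mem_span b s his hv]; simp

lemma aux_rayleigh_high (b : OrthonormalBasis ι ℝ E) (T : E →ₗ[ℝ] E) (lam : ι → ℝ)
    (hT : ∀ i, T (b i) = lam i • b i) (s : Finset ι) (c : ℝ)
    (hc : ∀ i ∈ s, lam i ≤ c) {v : E}
    (hv : v ∈ Submodule.span ℝ (b '' (s : Set ι))) :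
    ⟪T v, v⟫ ≤ c * ⟪v, v⟫ := by
  rw [aux_inner_map b T lam hT v, aux_inner_self b v, Finset.mul_sum]
  refine Finset.sum_le_sum fun i _ => ?_
  by_cases his : i ∈ s
  · exact mul_le_mul_of_nonneg_right (hc i his) (sq_nonneg _)
  · rw [aux_inner_eq_zero_of_mem_span b s his hv]; simp

lemma aux_finrank_span (b : OrthonormalBasis ι ℝ E) (s : Finset ι) :
    Module.finrank ℝ (Submodule.span ℝ (b '' (s : Set ι))) = s.card := by
  classical
  have h1 : Orthonormal ℝ (fun i : s => b i) :=
    b.orthonormal.comp _ Subtype.val_injective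
  have h2 : Set.range (fun i : s => b i) = b '' (s : Set ι) := by
    ext y; simp [Set.mem_image]
  rw [← h2, finrank_span_eq_card h1.linearIndependent, Fintype.card_coe]

lemma aux_exists_ne_zero [FiniteDimensional ℝ E] {V W : Submodule ℝ E}
    (h : Module.finrank ℝ E < Module.finrank ℝ V + Module.finrank ℝ W) :
    ∃ v, v ∈ V ⊓ W ∧ v ≠ 0 := by
  have key := Submodule.finrank_sup_add_finrank_inf_eq V W
  rcases eq_or_ne (V ⊓ W) ⊥ with hb | hb
  · rw [hb, finrank_bot, add_zero] at key
    exact absurd (key ▸ Submodule.finrank_le (V ⊔ W)) (not_le.2 (key ▸ h))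
  · exact Submodule.exists_mem_ne_zero_of_ne_bot hb

lemma aux_finrank_inf_ge [FiniteDimensional ℝ E] (V W : Submodule ℝ E) :
    Module.finrank ℝ V + Module.finrank ℝ W
      ≤ Module.finrank ℝ E + Module.finrank ℝ (V ⊓ W : Submodule ℝ E) := by
  have key := Submodule.finrank_sup_add_finrank_inf_eq V W
  have h2 : Module.finrank ℝ ↥(V ⊔ W) ≤ Module.finrank ℝ E := Submodule.finrank_le _
  omega

end InnerAux
lemma aux_multiset_eq_of_prod_eq {n : ℕ} {f g : Fin n → ℝ}
    (h : ∏ i, (X - C (f i)) = ∏ i, (X - C (g i))) :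
    Multiset.map f Finset.univ.val = Multiset.map g Finset.univ.val := by
  have key : ∀ u : Fin n → ℝ, (∏ i, (X - C (u i))) =
      ((Multiset.map u Finset.univ.val).map (fun a => X - C a)).prod := by
    intro u
    rw [Multiset.map_map]
    rfl
  have hf := roots_multiset_prod_X_sub_C (Multiset.map f (Finset.univ.val : Multiset (Fin n)))
  have hg := roots_multiset_prod_X_sub_C (Multiset.map g (Finset.univ.val : Multiset (Fin n)))
  rw [← hf, ← hg, ← key, ← key, h]

lemma aux_ofFn_coe {n : ℕ} (f : Fin n → ℝ) :
    (↑(List.ofFn f) : Multiset ℝ) = Multiset.map f Finset.univ.val := by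
  rw [List.ofFn_eq_map, Fin.univ_def]
  simp [Multiset.map_coe]

lemma aux_monotone_eq {n : ℕ} {f g : Fin n → ℝ} (hf : Monotone f) (hg : Monotone g)
    (h : Multiset.map f Finset.univ.val = Multiset.map g Finset.univ.val) : f = g := by
  apply List.ofFn_injective
  refine List.Perm.eq_of_sortedLE hf.sortedLE_ofFn hg.sortedLE_ofFn ?_
  rw [← Multiset.coe_eq_coe, aux_ofFn_coe, aux_ofFn_coe]
  exact h

lemma aux_multiset_comp_perm {n : ℕ} (f : Fin n → ℝ) (σ : Equiv.Perm (Fin n)) :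
    Multiset.map (f ∘ σ) Finset.univ.val = Multiset.map f Finset.univ.val := by
  rw [← Multiset.map_map]
  congr 1
  have : Multiset.map (⇑σ) Finset.univ.val = (Finset.univ.map σ.toEmbedding).val := rfl
  rw [this, Finset.map_univ_equiv]

/-- Given monotone `lam` with the same root multiset as `μ`, find a permutation. -/
lemma aux_exists_perm {n : ℕ} (lam μ : Fin n → ℝ) (hlam : Monotone lam)
    (h : Multiset.map lam Finset.univ.val = Multiset.map μ Finset.univ.val) :
    ∃ σ : Equiv.Perm (Fin n), lam = μ ∘ σ := by
  refine ⟨Tuple.sort μ, aux_monotone_eq hlam (Tuple.monotone_sort μ) ?_⟩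
  rw [aux_multiset_comp_perm μ (Tuple.sort μ)]
  exact h

lemma aux_charpoly_diagonal {n : ℕ} (d : Fin n → ℝ) :
    (Matrix.diagonal d).charpoly = ∏ i, (X - C (d i)) := by
  have : charmatrix (Matrix.diagonal d) = Matrix.diagonal (fun i => X - C (d i)) := by
    ext i j
    by_cases h : i = j
    · subst h; simp [charmatrix_apply_eq]
    · simp [charmatrix_apply_ne _ _ _ h, Matrix.diagonal_apply_ne _ h, Matrix.diagonal_apply_ne' _ h]
  rw [Matrix.charpoly, this, Matrix.det_diagonal]

lemma aux_charpoly_conj {n : ℕ} (U D : Matrix (Fin n) (Fin n) ℝ)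
    (hU : U * star U = 1) (hU' : star U * U = 1) :
    (U * D * star U).charpoly = D.charpoly := by
  set F : Matrix (Fin n) (Fin n) ℝ →+* Matrix (Fin n) (Fin n) ℝ[X] := (C : ℝ →+* ℝ[X]).mapMatrix with hF
  have key : charmatrix (U * D * star U) = F U * charmatrix D * F (star U) := by
    rw [charmatrix, charmatrix, Matrix.mul_sub, Matrix.sub_mul]
    congr 1
    · have comm : F U * Matrix.scalar (Fin n) (X : ℝ[X])
          = Matrix.scalar (Fin n) (X : ℝ[X]) * F U :=
        (Matrix.scalar_commute (X : ℝ[X]) (fun r' => Commute.all _ _) _).symm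
      rw [comm, Matrix.mul_assoc, ← _root_.map_mul F, hU, _root_.map_one F, Matrix.mul_one]
    · show F (U * D * star U) = F U * F D * F (star U)
      rw [_root_.map_mul F, _root_.map_mul F]
  rw [Matrix.charpoly, Matrix.charpoly, key, Matrix.det_mul, Matrix.det_mul]
  have h1 : (F U).det * (charmatrix D).det * (F (star U)).det
      = (charmatrix D).det * ((F U).det * (F (star U)).det) := by ring
  rw [h1, hF, ← RingHom.map_det, ← RingHom.map_det, ← _root_.map_mul (C : ℝ →+* ℝ[X]),
    ← Matrix.det_mul, hU]
  simp
lemma aux_isHermitian {n : ℕ} {A : Matrix (Fin n) (Fin n) ℝ} (hA : A.IsSymm) :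
    A.IsHermitian := by
  rw [Matrix.IsHermitian, Matrix.conjTranspose]
  exact Matrix.isHermitian_iff_isSymm.mpr hA

lemma aux_charpoly_eigenvalues {n : ℕ} {A : Matrix (Fin n) (Fin n) ℝ} (hA : A.IsHermitian) :
    A.charpoly = ∏ i, (X - C (hA.eigenvalues i)) := by
  have hU1 : (hA.eigenvectorUnitary : Matrix (Fin n) (Fin n) ℝ)
      * star (hA.eigenvectorUnitary : Matrix (Fin n) (Fin n) ℝ) = 1 :=
    Matrix.mem_unitaryGroup_iff.mp hA.eigenvectorUnitary.2
  have hU2 : star (hA.eigenvectorUnitary : Matrix (Fin n) (Fin n) ℝ)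
      * (hA.eigenvectorUnitary : Matrix (Fin n) (Fin n) ℝ) = 1 :=
    Matrix.mem_unitaryGroup_iff'.mp hA.eigenvectorUnitary.2
  have hd : (RCLike.ofReal ∘ hA.eigenvalues : Fin n → ℝ) = hA.eigenvalues := by
    funext i; simp [RCLike.ofReal_real_eq_id]
  calc A.charpoly
      = ((hA.eigenvectorUnitary : Matrix (Fin n) (Fin n) ℝ)
        * Matrix.diagonal (RCLike.ofReal ∘ hA.eigenvalues)
        * star (hA.eigenvectorUnitary : Matrix (Fin n) (Fin n) ℝ)).charpoly := by
        rw [← Unitary.conjStarAlgAut_apply (S := ℝ), ← hA.spectral_theorem]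
    _ = (Matrix.diagonal (RCLike.ofReal ∘ hA.eigenvalues)).charpoly :=
        aux_charpoly_conj _ _ hU1 hU2
    _ = ∏ i, (X - C (hA.eigenvalues i)) := by
        rw [hd, aux_charpoly_diagonal]


/-- Weyl/Cauchy interlacing for a rank-one positive semidefinite perturbation: if
`λ_1 ≤ ... ≤ λ_n` are the eigenvalues of a real symmetric `A` and `ν_1 ≤ ... ≤ ν_n` those
of `A + xxᵀ`, then `λ_i ≤ ν_i ≤ λ_{i+1}` for `i < n`, and `λ_n ≤ ν_n`. -/
theorem rank_one_interlacing (n : ℕ) (A : Matrix (Fin n) (Fin n) ℝ) (hA : A.IsSymm)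
    (x : Fin n → ℝ) (lam ν : Fin n → ℝ) (hlam : Monotone lam) (hν : Monotone ν)
    (hfA : A.charpoly = ∏ i, (X - C (lam i)))
    (hfB : (A + vecMulVec x x).charpoly = ∏ i, (X - C (ν i))) :
    (∀ i, lam i ≤ ν i) ∧
      ∀ i j : Fin n, (i : ℕ) + 1 = (j : ℕ) → ν i ≤ lam j := by
  classical
  set B := A + vecMulVec x x with hBdef
  have hBsymm : B.IsSymm := by
    rw [Matrix.IsSymm] at hA ⊢
    rw [hBdef, Matrix.transpose_add, hA]
    congr 1
    ext i j
    simp [Matrix.vecMulVec_apply, mul_comm]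
  have hA' : A.IsHermitian := aux_isHermitian hA
  have hB' : B.IsHermitian := aux_isHermitian hBsymm
  obtain ⟨σ, hσ⟩ := aux_exists_perm lam hA'.eigenvalues hlam
    (aux_multiset_eq_of_prod_eq (by rw [← hfA, aux_charpoly_eigenvalues hA']))
  obtain ⟨τ, hτ⟩ := aux_exists_perm ν hB'.eigenvalues hν
    (aux_multiset_eq_of_prod_eq (by rw [← hfB, aux_charpoly_eigenvalues hB']))
  set u : OrthonormalBasis (Fin n) ℝ (EuclideanSpace ℝ (Fin n)) :=
    hA'.eigenvectorBasis.reindex σ.symm with hu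
  set w : OrthonormalBasis (Fin n) ℝ (EuclideanSpace ℝ (Fin n)) :=
    hB'.eigenvectorBasis.reindex τ.symm with hw
  set T : EuclideanSpace ℝ (Fin n) →ₗ[ℝ] EuclideanSpace ℝ (Fin n) :=
    (Matrix.toEuclideanLin A : _ →ₗ[ℝ] _) with hT
  set S : EuclideanSpace ℝ (Fin n) →ₗ[ℝ] EuclideanSpace ℝ (Fin n) :=
    (Matrix.toEuclideanLin B : _ →ₗ[ℝ] _) with hS
  have hTu : ∀ i, T (u i) = lam i • u i := by
    intro i
    have h2 := hA'.mulVec_eigenvectorBasis (σ i)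
    have h1 : u i = hA'.eigenvectorBasis (σ i) := by
      rw [hu, OrthonormalBasis.reindex_apply, Equiv.symm_symm]
    have h3 : lam i = hA'.eigenvalues (σ i) := congrFun hσ i
    rw [h1, h3, hT]
    apply (WithLp.equiv 2 (Fin n → ℝ)).injective
    simp only [WithLp.equiv_apply, Matrix.ofLp_toEuclideanLin_apply, WithLp.ofLp_smul]
    exact h2
  have hSw : ∀ i, S (w i) = ν i • w i := by
    intro i
    have h2 := hB'.mulVec_eigenvectorBasis (τ i)
    have h1 : w i = hB'.eigenvectorBasis (τ i) := by
      rw [hw, OrthonormalBasis.reindex_apply, Equiv.symm_symm]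
    have h3 : ν i = hB'.eigenvalues (τ i) := congrFun hτ i
    rw [h1, h3, hS]
    apply (WithLp.equiv 2 (Fin n → ℝ)).injective
    simp only [WithLp.equiv_apply, Matrix.ofLp_toEuclideanLin_apply, WithLp.ofLp_smul]
    exact h2
  set xE : EuclideanSpace ℝ (Fin n) := (WithLp.equiv 2 (Fin n → ℝ)).symm x with hxE
  have hxv : ∀ v : EuclideanSpace ℝ (Fin n), ⟪S v, v⟫ = ⟪T v, v⟫ + ⟪xE, v⟫ ^ 2 := by
    intro v
    set v' : Fin n → ℝ := WithLp.equiv 2 (Fin n → ℝ) v with hv'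
    have hvm : (vecMulVec x x) *ᵥ v' = (x ⬝ᵥ v') • x := by
      funext i
      show ∑ j, vecMulVec x x i j * v' j = (x ⬝ᵥ v') * x i
      simp only [Matrix.vecMulVec_apply, dotProduct]
      rw [Finset.sum_mul]
      exact Finset.sum_congr rfl fun j _ => by ring
    have hsplit : S v = T v + (WithLp.equiv 2 (Fin n → ℝ)).symm ((x ⬝ᵥ v') • x) := by
      rw [hS, hT, hBdef]
      apply (WithLp.equiv 2 (Fin n → ℝ)).injective
      simp only [WithLp.equiv_apply, Matrix.ofLp_toEuclideanLin_apply, WithLp.ofLp_add,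
        WithLp.equiv_symm_apply, WithLp.ofLp_toLp]
      rw [← hvm]
      show (A + vecMulVec x x) *ᵥ v' = _
      rw [Matrix.add_mulVec]
      rfl
    have hinner : ⟪xE, v⟫ = x ⬝ᵥ v' := by
      rw [hxE, PiLp.inner_apply]
      simp [dotProduct, hv', mul_comm]
    rw [hsplit, inner_add_left]
    congr 1
    have : ((WithLp.equiv 2 (Fin n → ℝ)).symm ((x ⬝ᵥ v') • x) : EuclideanSpace ℝ (Fin n))
        = (x ⬝ᵥ v') • xE := by
      rw [hxE, WithLp.equiv_symm_apply, WithLp.toLp_smul]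
    rw [this, real_inner_smul_left, hinner]
    ring
  have hfinE : Module.finrank ℝ (EuclideanSpace ℝ (Fin n)) = n := by
    simp [finrank_euclideanSpace]
  constructor
  · intro i
    obtain ⟨v, hv, hv0⟩ := aux_exists_ne_zero
      (V := Submodule.span ℝ (u '' ↑(Finset.Ici i)))
      (W := Submodule.span ℝ (w '' ↑(Finset.Iic i)))
      (by rw [aux_finrank_span, aux_finrank_span, Fin.card_Ici, Fin.card_Iic, hfinE]
          have := i.isLt; omega)
    obtain ⟨hv1, hv2⟩ := Submodule.mem_inf.mp hv
    have h1 : lam i * ⟪v, v⟫ ≤ ⟪T v, v⟫ :=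
      aux_rayleigh_low u T lam hTu _ _ (fun j hj => hlam (Finset.mem_Ici.mp hj)) hv1
    have h2 : ⟪S v, v⟫ ≤ ν i * ⟪v, v⟫ :=
      aux_rayleigh_high w S ν hSw _ _ (fun j hj => hν (Finset.mem_Iic.mp hj)) hv2
    have h3 : ⟪T v, v⟫ ≤ ⟪S v, v⟫ := by
      rw [hxv v]; nlinarith [sq_nonneg (⟪xE, v⟫)]
    have hpos : (0 : ℝ) < ⟪v, v⟫ := real_inner_self_nonneg.lt_of_ne
      (fun h => hv0 ((inner_self_eq_zero (𝕜 := ℝ)).mp h.symm))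
    exact le_of_mul_le_mul_right (by linarith) hpos
  · intro i j hij
    have hK : n - 1 ≤ Module.finrank ℝ ((ℝ ∙ xE)ᗮ : Submodule ℝ (EuclideanSpace ℝ (Fin n))) := by
      have hsum := Submodule.finrank_add_finrank_orthogonal (K := (ℝ ∙ xE))
      have hle : Module.finrank ℝ (ℝ ∙ xE : Submodule ℝ (EuclideanSpace ℝ (Fin n))) ≤ 1 := by
        rcases eq_or_ne xE 0 with h0 | h0
        · rw [h0, Submodule.span_zero_singleton]
          simp
        · rw [finrank_span_singleton h0]
      rw [hfinE] at hsum
      omega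
    set V := Submodule.span ℝ (w '' ↑(Finset.Ici i)) with hV
    set W := Submodule.span ℝ (u '' ↑(Finset.Iic j)) with hW
    have hVW : 2 ≤ Module.finrank ℝ (V ⊓ W : Submodule ℝ (EuclideanSpace ℝ (Fin n))) := by
      have h5 := aux_finrank_inf_ge V W
      have h6 : Module.finrank ℝ V = n - (i : ℕ) := by
        rw [hV, aux_finrank_span, Fin.card_Ici]
      have h7 : Module.finrank ℝ W = (j : ℕ) + 1 := by
        rw [hW, aux_finrank_span, Fin.card_Iic]
      rw [h6, h7, hfinE] at h5
      have := i.isLt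
      omega
    obtain ⟨v, hv, hv0⟩ := aux_exists_ne_zero (V := V ⊓ W) (W := (ℝ ∙ xE)ᗮ)
      (by rw [hfinE]; omega)
    obtain ⟨hv12, hv3⟩ := Submodule.mem_inf.mp hv
    obtain ⟨hv1, hv2⟩ := Submodule.mem_inf.mp hv12
    have h1 : ν i * ⟪v, v⟫ ≤ ⟪S v, v⟫ :=
      aux_rayleigh_low w S ν hSw _ _ (fun k hk => hν (Finset.mem_Ici.mp hk)) hv1
    have h2 : ⟪T v, v⟫ ≤ lam j * ⟪v, v⟫ :=
      aux_rayleigh_high u T lam hTu _ _ (fun k hk => hlam (Finset.mem_Iic.mp hk)) hv2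
    have hperp : ⟪xE, v⟫ = 0 :=
      (Submodule.mem_orthogonal _ v).mp hv3 xE (Submodule.mem_span_singleton_self xE)
    have h3 : ⟪S v, v⟫ = ⟪T v, v⟫ := by rw [hxv v, hperp]; ring
    have hpos : (0 : ℝ) < ⟪v, v⟫ := real_inner_self_nonneg.lt_of_ne
      (fun h => hv0 ((inner_self_eq_zero (𝕜 := ℝ)).mp h.symm))
    exact le_of_mul_le_mul_right (by linarith) hpos
end
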